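/- arXiv:1607.03327 — 4 statements merged into one kernel-verified Lean document; each statement's English description precedes it below -/
import Mathlib

section
/- Let m : ℝ → ℝ be a continuous function, let σ be a natural number, and let z = (p,q,v,w) : ℝ × ℝ → ℝ⁴ be a C¹ function satisfying, at every point (t,x), the Hamiltonian PDE M ∂ₜz(t,x) + m(t) K ∂ₓz(t,x) = ∇S₁(z(t,x)) + m(t) ∇S₂(z(t,x)). Suppose ξ, η : ℝ × ℝ → ℝ⁴ are C¹ solutions of the associated variational (linearized) equation M ∂ₜζ + m(t) K ∂ₓζ = Hess S₁(z(t,x)) ζ + m(t) Hess S₂(z(t,x)) ζ. Then for every (t,x), ∂ₜ⟨ξ(t,x), M η(t,x)⟩ + m(t) ∂ₓ⟨ξ(t,x), K η(t,x)⟩ = 0 (the multi-symplectic conservation law for the nonlinear Schrödinger equation with time-dependent dispersion, the deterministic pathwise form of the stochastic multi-symplectic conservation law). -/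
/-!
By the product rule and the skew-symmetry of `M` and `K`, the left-hand side equals
`⟨ξ, M ∂ₜη + m K ∂ₓη⟩ - ⟨η, M ∂ₜξ + m K ∂ₓξ⟩`, which by the variational equations is
`⟨ξ, H η⟩ - ⟨η, H ξ⟩` with `H = Hess S₁(z) + m Hess S₂(z)`. This vanishes because the Hessian of
a `C²` function is symmetric.
-/

open scoped BigOperators Matrix

noncomputable section

/-- Euclidean inner product on `ℝ⁴`. -/
def dot4 (x y : Fin 4 → ℝ) : ℝ := ∑ i, x i * y i

/-- The matrix `M` of the multi-symplectic formulation. -/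
def Mmat : Matrix (Fin 4) (Fin 4) ℝ :=
  !![0, -1, 0, 0; 1, 0, 0, 0; 0, 0, 0, 0; 0, 0, 0, 0]

/-- The matrix `K` of the multi-symplectic formulation. -/
def Kmat : Matrix (Fin 4) (Fin 4) ℝ :=
  !![0, 0, 1, 0; 0, 0, 0, 1; -1, 0, 0, 0; 0, -1, 0, 0]

/-- `S₁(p,q,v,w) = −(p²+q²)^{σ+1}/(2σ+2)`. -/
def S1 (σ : ℕ) (z : Fin 4 → ℝ) : ℝ :=
  -(z 0 ^ 2 + z 1 ^ 2) ^ (σ + 1) / (2 * (σ : ℝ) + 2)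

/-- `S₂(p,q,v,w) = −(v²+w²)/2`. -/
def S2 (z : Fin 4 → ℝ) : ℝ := -(z 2 ^ 2 + z 3 ^ 2) / 2

/-- The gradient of `f : ℝ⁴ → ℝ`: the vector of partial derivatives. -/
def grad4 (f : (Fin 4 → ℝ) → ℝ) (z : Fin 4 → ℝ) : Fin 4 → ℝ :=
  fun i => fderiv ℝ f z (Pi.single i 1)

/-- The Hessian of `f : ℝ⁴ → ℝ` at `z` applied to a vector `ζ`: the derivative of the
gradient at `z` in the direction `ζ`. -/
def hess4 (f : (Fin 4 → ℝ) → ℝ) (z ζ : Fin 4 → ℝ) : Fin 4 → ℝ :=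
  fderiv ℝ (grad4 f) z ζ

/-- Partial derivative in the first (time) variable. -/
def pt (z : ℝ × ℝ → Fin 4 → ℝ) (t x : ℝ) : Fin 4 → ℝ := deriv (fun s => z (s, x)) t

/-- Partial derivative in the second (space) variable. -/
def px (z : ℝ × ℝ → Fin 4 → ℝ) (t x : ℝ) : Fin 4 → ℝ := deriv (fun y => z (t, y)) x

namespace Matrix

variable {n R : Type*} [Fintype n] [CommRing R]

theorem dotProduct_mulVec_of_transpose_eq_neg {A : Matrix n n R} (hA : Aᵀ = -A) (x y : n → R) :
    x ⬝ᵥ A *ᵥ y = -(y ⬝ᵥ A *ᵥ x) := by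
  rw [dotProduct_mulVec, ← mulVec_transpose, hA, neg_mulVec, neg_dotProduct, dotProduct_comm]

theorem dotProduct_flux_eq_zero {A B : Matrix n n R} (hA : Aᵀ = -A) (hB : Bᵀ = -B) (c : R)
    {ξ η ξt ξx ηt ηx Hξ Hη : n → R}
    (hξ : A *ᵥ ξt + c • B *ᵥ ξx = Hξ) (hη : A *ᵥ ηt + c • B *ᵥ ηx = Hη)
    (hH : ξ ⬝ᵥ Hη = η ⬝ᵥ Hξ) :
    ξt ⬝ᵥ A *ᵥ η + ξ ⬝ᵥ A *ᵥ ηt + c * (ξx ⬝ᵥ B *ᵥ η + ξ ⬝ᵥ B *ᵥ ηx) = 0 := by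
  have hξ' : η ⬝ᵥ A *ᵥ ξt + c * η ⬝ᵥ B *ᵥ ξx = η ⬝ᵥ Hξ := by
    rw [← hξ, dotProduct_add, dotProduct_smul, smul_eq_mul]
  have hη' : ξ ⬝ᵥ A *ᵥ ηt + c * ξ ⬝ᵥ B *ᵥ ηx = ξ ⬝ᵥ Hη := by
    rw [← hη, dotProduct_add, dotProduct_smul, smul_eq_mul]
  rw [dotProduct_mulVec_of_transpose_eq_neg hA ξt, dotProduct_mulVec_of_transpose_eq_neg hB ξx]
  linear_combination hη' - hξ' + hH

end Matrix

section Calculus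

variable {𝕜 ι : Type*} [NontriviallyNormedField 𝕜] [Fintype ι]

theorem HasDerivAt.dotProduct {f g : 𝕜 → ι → 𝕜} {f' g' : ι → 𝕜} {t : 𝕜}
    (hf : HasDerivAt f f' t) (hg : HasDerivAt g g' t) :
    HasDerivAt (fun s => f s ⬝ᵥ g s) (f' ⬝ᵥ g t + f t ⬝ᵥ g') t := by
  simp only [_root_.dotProduct, ← Finset.sum_add_distrib]
  exact HasDerivAt.fun_sum fun i _ => (hasDerivAt_pi.1 hf i).mul (hasDerivAt_pi.1 hg i)

theorem HasDerivAt.mulVec [CompleteSpace 𝕜] (A : Matrix ι ι 𝕜) {g : 𝕜 → ι → 𝕜}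
    {g' : ι → 𝕜} {t : 𝕜} (hg : HasDerivAt g g' t) :
    HasDerivAt (fun s => A *ᵥ g s) (A *ᵥ g') t :=
  (Matrix.mulVecLin A).toContinuousLinearMap.hasFDerivAt.comp_hasDerivAt t hg

theorem sum_mul_apply_single [DecidableEq ι] (g : (ι → 𝕜) →L[𝕜] 𝕜) (a : ι → 𝕜) :
    ∑ i, a i * g (Pi.single i 1) = g a := by
  conv_rhs => rw [pi_eq_sum_univ' a]
  simp [map_sum, map_smul]

end Calculus

theorem dot4_eq_dotProduct (x y : Fin 4 → ℝ) : dot4 x y = x ⬝ᵥ y := rfl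

theorem transpose_Mmat : Mmatᵀ = -Mmat := by
  ext i j; fin_cases i <;> fin_cases j <;> simp [Mmat]

theorem transpose_Kmat : Kmatᵀ = -Kmat := by
  ext i j; fin_cases i <;> fin_cases j <;> simp [Kmat]

theorem hasDerivAt_pt {f : ℝ × ℝ → Fin 4 → ℝ} {t x : ℝ} (hf : DifferentiableAt ℝ f (t, x)) :
    HasDerivAt (fun s => f (s, x)) (pt f t x) t :=
  (hf.comp t ((hasDerivAt_id t).prodMk (hasDerivAt_const t x)).differentiableAt).hasDerivAt

theorem hasDerivAt_px {f : ℝ × ℝ → Fin 4 → ℝ} {t x : ℝ} (hf : DifferentiableAt ℝ f (t, x)) :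
    HasDerivAt (fun y => f (t, y)) (px f t x) x :=
  (hf.comp x ((hasDerivAt_const x t).prodMk (hasDerivAt_id x)).differentiableAt).hasDerivAt

theorem dotProduct_hess4_eq_fderiv_fderiv {f : (Fin 4 → ℝ) → ℝ} {z : Fin 4 → ℝ}
    (hf : ContDiffAt ℝ 2 f z) (a b : Fin 4 → ℝ) :
    a ⬝ᵥ hess4 f z b = fderiv ℝ (fderiv ℝ f) z b a := by
  have hD : HasFDerivAt (fderiv ℝ f) (fderiv ℝ (fderiv ℝ f) z) z :=
    ((hf.fderiv_right (m := 1) (by norm_num)).differentiableAt one_ne_zero).hasFDerivAt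
  have hgrad : HasFDerivAt (grad4 f)
      ((ContinuousLinearMap.pi fun i => ContinuousLinearMap.apply ℝ ℝ (Pi.single i 1)).comp
        (fderiv ℝ (fderiv ℝ f) z)) z :=
    ((ContinuousLinearMap.pi fun i => ContinuousLinearMap.apply ℝ ℝ (Pi.single i 1) :
      ((Fin 4 → ℝ) →L[ℝ] ℝ) →L[ℝ] Fin 4 → ℝ)).hasFDerivAt.comp z hD
  rw [hess4, hgrad.fderiv]
  exact sum_mul_apply_single _ a

theorem dotProduct_hess4_comm {f : (Fin 4 → ℝ) → ℝ} {z : Fin 4 → ℝ} (hf : ContDiffAt ℝ 2 f z)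
    (a b : Fin 4 → ℝ) : a ⬝ᵥ hess4 f z b = b ⬝ᵥ hess4 f z a := by
  rw [dotProduct_hess4_eq_fderiv_fderiv hf, dotProduct_hess4_eq_fderiv_fderiv hf,
    (hf.isSymmSndFDerivAt (by simp)).eq]

theorem contDiff_S1 (σ : ℕ) : ContDiff ℝ 2 (S1 σ) := by
  unfold S1; fun_prop

theorem contDiff_S2 : ContDiff ℝ 2 S2 := by
  unfold S2; fun_prop

theorem stmt_0_general (m : ℝ → ℝ) (σ : ℕ)
    (z ξ η : ℝ × ℝ → Fin 4 → ℝ)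
    (hξ : ContDiff ℝ 1 ξ) (hη : ContDiff ℝ 1 η)
    (hξeq : ∀ t x : ℝ,
      Mmat.mulVec (pt ξ t x) + m t • Kmat.mulVec (px ξ t x)
        = hess4 (S1 σ) (z (t, x)) (ξ (t, x)) + m t • hess4 S2 (z (t, x)) (ξ (t, x)))
    (hηeq : ∀ t x : ℝ,
      Mmat.mulVec (pt η t x) + m t • Kmat.mulVec (px η t x)
        = hess4 (S1 σ) (z (t, x)) (η (t, x)) + m t • hess4 S2 (z (t, x)) (η (t, x)))
    (t x : ℝ) :
    deriv (fun s => dot4 (ξ (s, x)) (Mmat.mulVec (η (s, x)))) t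
      + m t * deriv (fun y => dot4 (ξ (t, y)) (Kmat.mulVec (η (t, y)))) x = 0 := by
  have hξ' := (hξ.differentiable one_ne_zero) (t, x)
  have hη' := (hη.differentiable one_ne_zero) (t, x)
  have hHess :
      ξ (t, x) ⬝ᵥ (hess4 (S1 σ) (z (t, x)) (η (t, x)) + m t • hess4 S2 (z (t, x)) (η (t, x)))
        = η (t, x) ⬝ᵥ (hess4 (S1 σ) (z (t, x)) (ξ (t, x)) + m t • hess4 S2 (z (t, x)) (ξ (t, x))) :=
    by
    simp only [dotProduct_add, dotProduct_smul,
      dotProduct_hess4_comm (contDiff_S1 σ).contDiffAt (ξ (t, x)),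
      dotProduct_hess4_comm contDiff_S2.contDiffAt (ξ (t, x))]
  simp only [dot4_eq_dotProduct]
  rw [((hasDerivAt_pt hξ').dotProduct ((hasDerivAt_pt hη').mulVec Mmat)).deriv,
    ((hasDerivAt_px hξ').dotProduct ((hasDerivAt_px hη').mulVec Kmat)).deriv]
  exact Matrix.dotProduct_flux_eq_zero transpose_Mmat transpose_Kmat (m t)
    (hξeq t x) (hηeq t x) hHess

/-- the multi-symplectic conservation law for the nonlinear Schrödinger
equation with time-dependent dispersion: if `z` solves
`M ∂ₜz + m(t) K ∂ₓz = ∇S₁(z) + m(t) ∇S₂(z)` and `ξ, η` solve the associated variational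
equation, then `∂ₜ⟨ξ, Mη⟩ + m(t) ∂ₓ⟨ξ, Kη⟩ = 0` everywhere. -/
theorem stmt_0 (m : ℝ → ℝ) (hm : Continuous m) (σ : ℕ)
    (z ξ η : ℝ × ℝ → Fin 4 → ℝ)
    (hz : ContDiff ℝ 1 z) (hξ : ContDiff ℝ 1 ξ) (hη : ContDiff ℝ 1 η)
    (hzeq : ∀ t x : ℝ,
      Mmat.mulVec (pt z t x) + m t • Kmat.mulVec (px z t x)
        = grad4 (S1 σ) (z (t, x)) + m t • grad4 S2 (z (t, x)))
    (hξeq : ∀ t x : ℝ,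
      Mmat.mulVec (pt ξ t x) + m t • Kmat.mulVec (px ξ t x)
        = hess4 (S1 σ) (z (t, x)) (ξ (t, x)) + m t • hess4 S2 (z (t, x)) (ξ (t, x)))
    (hηeq : ∀ t x : ℝ,
      Mmat.mulVec (pt η t x) + m t • Kmat.mulVec (px η t x)
        = hess4 (S1 σ) (z (t, x)) (η (t, x)) + m t • hess4 S2 (z (t, x)) (η (t, x)))
    (t x : ℝ) :
    deriv (fun s => dot4 (ξ (s, x)) (Mmat.mulVec (η (s, x)))) t
      + m t * deriv (fun y => dot4 (ξ (t, y)) (Kmat.mulVec (η (t, y)))) x = 0 :=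
  stmt_0_general m σ z ξ η hξ hη hξeq hηeq t x

end
end

section
/- Let σ be a positive natural number, δt > 0 and c ∈ ℝ, and let u, w : ℝ → ℂ be Schwartz functions. Write ū := (u + w)/2. If for every x ∈ ℝ the mid-point scheme equation holds: i (w(x) − u(x))/δt + c · ū''(x) + |ū(x)|^{2σ} ū(x) = 0, then the charge conservation law holds: ∫_ℝ |w(x)|² dx = ∫_ℝ |u(x)|² dx (Proposition 3.1, charge conservation of the mid-point scheme, applied pathwise with c = δW_n/δt). -/
/-!
Multiplying the scheme by `conj ū` and taking imaginary parts kills the nonlinear term (it is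
real) and turns the time difference into `(|w|² - |u|²) / (2 δt)`, so pointwise
`|w|² - |u|² = -2 δt c · Im (conj ū · ū'')`. Integrating by parts,
`∫ conj ū · ū'' = -∫ |ū'|²` is real, hence the right-hand side integrates to zero.
-/

open Complex MeasureTheory
open scoped ComplexConjugate

theorem SchwartzMap.integral_im_conj_mul_deriv_deriv (f : SchwartzMap ℝ ℂ) :
    ∫ x, (conj (f x) * deriv (deriv f) x).im = 0 := by
  let L : ℂ →L[ℝ] ℂ →L[ℝ] ℝ :=
    (ContinuousLinearMap.compL ℝ ℂ ℂ ℝ imCLM).comp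
      ((ContinuousLinearMap.mul ℝ ℂ).comp conjCLE.toContinuousLinearMap)
  have h := f.integral_bilinear_deriv_right_eq_neg_left (derivCLM ℝ ℂ f) L
  have hf' : ⇑(derivCLM ℝ ℂ f) = deriv f := rfl
  rw [hf'] at h
  simpa [L, mul_comm] using h

theorem Complex.sq_norm_sub_sq_norm_eq_of_midpoint {u w v d : ℂ} {δt c r : ℝ} (hδt : δt ≠ 0)
    (hv : v = (u + w) / 2) (h : I * (w - u) / δt + c * d + r * v = 0) :
    ‖w‖ ^ 2 - ‖u‖ ^ 2 = -2 * δt * c * (conj v * d).im := by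
  have hδt' : (δt : ℂ) ≠ 0 := ofReal_ne_zero.mpr hδt
  have h' : I * (w - u) + δt * c * d + δt * r * v = 0 := by
    field_simp at h
    linear_combination h
  have hre := congrArg re h'
  have him := congrArg im h'
  subst hv
  simp only [add_re, add_im, mul_re, mul_im, sub_re, sub_im, I_re, I_im, ofReal_re, ofReal_im,
    zero_re, zero_im, div_ofNat_re, div_ofNat_im] at hre him
  simp only [Complex.sq_norm, normSq_apply, mul_im, conj_re, conj_im, div_ofNat_re,
    div_ofNat_im, add_re, add_im]
  -- the imaginary part of `h' * conj v`, times 2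
  linear_combination (u.re + w.re) * him - (u.im + w.im) * hre

theorem stmt_12_general (σ : ℕ) (δt : ℝ) (hδt : 0 < δt) (c : ℝ)
    (u w : SchwartzMap ℝ ℂ)
    (ubar : ℝ → ℂ) (hubar : ∀ x, ubar x = (u x + w x) / 2)
    (hscheme : ∀ x : ℝ,
      Complex.I * (w x - u x) / (δt : ℂ) + (c : ℂ) * deriv (deriv ubar) x
        + ((Complex.normSq (ubar x) : ℂ)) ^ σ * ubar x = 0) :
    ∫ x : ℝ, (‖w x‖) ^ 2 = ∫ x : ℝ, (‖u x‖) ^ 2 := by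
  set v : SchwartzMap ℝ ℂ := (2 : ℂ)⁻¹ • (u + w)
  obtain rfl : ubar = v := funext fun x => by
    simp only [hubar, v, smul_apply, add_apply, smul_eq_mul]
    ring
  have hcharge (x : ℝ) :
      ‖w x‖ ^ 2 - ‖u x‖ ^ 2 = -2 * δt * c * (conj (v x) * deriv (deriv v) x).im :=
    sq_norm_sub_sq_norm_eq_of_midpoint (r := normSq (v x) ^ σ) hδt.ne' (hubar x)
      (by exact_mod_cast hscheme x)
  have hint (f : SchwartzMap ℝ ℂ) : Integrable fun x => ‖f x‖ ^ 2 :=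
    (f.memLp 2).integrable_norm_pow two_ne_zero
  rw [← sub_eq_zero, ← integral_sub (hint w) (hint u), integral_congr_ae (.of_forall hcharge),
    integral_const_mul, v.integral_im_conj_mul_deriv_deriv, mul_zero]

/-- charge conservation of the mid-point scheme (pathwise, `c = δW_n/δt`):
if Schwartz functions `u, w` satisfy `i(w−u)/δt + c ū'' + |ū|^{2σ} ū = 0` with
`ū = (u+w)/2`, then `∫ |w|² = ∫ |u|²`. -/
theorem stmt_12 (σ : ℕ) (hσ : 0 < σ) (δt : ℝ) (hδt : 0 < δt) (c : ℝ)
    (u w : SchwartzMap ℝ ℂ)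
    (ubar : ℝ → ℂ) (hubar : ∀ x, ubar x = (u x + w x) / 2)
    (hscheme : ∀ x : ℝ,
      Complex.I * (w x - u x) / (δt : ℂ) + (c : ℂ) * deriv (deriv ubar) x
        + ((Complex.normSq (ubar x) : ℂ)) ^ σ * ubar x = 0) :
    ∫ x : ℝ, (‖w x‖) ^ 2 = ∫ x : ℝ, (‖u x‖) ^ 2 :=
  stmt_12_general σ δt hδt c u w ubar hubar hscheme
end

section
/- Let σ be a positive natural number, N_x ≥ 2 a natural number, δt > 0, δx > 0 and c ∈ ℝ. Let u, u' : {0,1,…,N_x} → ℂ satisfy the homogeneous Dirichlet boundary conditions u_0 = u_{N_x} = u'_0 = u'_{N_x} = 0, and write ū_j := (u_j + u'_j)/2. Suppose that for every interior index j (1 ≤ j ≤ N_x − 1) the fully discrete mid-point scheme holds: i (u'_j − u_j)/δt + (c/δt) · (ū_{j+1} − 2ū_j + ū_{j−1})/δx² + |ū_j|^{2σ} ū_j = 0. Then the discrete charge conservation law holds: δx · Σ_{j=0}^{N_x} |u'_j|² = δx · Σ_{j=0}^{N_x} |u_j|² (Theorem 3.7, equation (3.17), applied pathwise with c the Brownian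 increment δW_n). -/
open Complex Finset ComplexConjugate

/-!
Multiplying the scheme at `j` by `conj ū_j` and taking imaginary parts, the nonlinear term
`|ū_j|^{2σ} |ū_j|²` is real and drops out, while the time difference contributes
`(|u'_j|² - |u_j|²) / 2`. What is left is proportional to `Im((Δū)_j conj ū_j)`, and summing
over `j` this telescopes to boundary terms that vanish under the Dirichlet condition.
-/

/-- Truncated subtraction gives `v (0 - 1) = v 0`, which keeps the `j = 0` term in telescoping form. -/
theorem im_sum_laplacian_mul_conj_eq_zero {v : ℕ → ℂ} {N : ℕ} (hN : v N = 0) :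
    (∑ j ∈ range (N + 1), (v (j + 1) - 2 * v j + v (j - 1)) * conj (v j)).im = 0 := by
  set b : ℕ → ℝ := fun j => (v j * conj (v (j - 1))).im
  have hterm : ∀ j, ((v (j + 1) - 2 * v j + v (j - 1)) * conj (v j)).im = b (j + 1) - b j := by
    intro j
    simp [b, mul_im]
    ring
  rw [im_sum, sum_congr rfl fun j _ => hterm j, sum_range_sub]
  simp [b, hN, mul_comm]

theorem normSq_sub_normSq_eq_of_midpoint_step {σ : ℕ} {δt δx c : ℝ} (hδt : δt ≠ 0)
    {z w ū L : ℂ} (hū : ū = (z + w) / 2)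
    (h : I * (w - z) / δt + (c / δt) * L / δx ^ 2 + (normSq ū : ℂ) ^ σ * ū = 0) :
    normSq w - normSq z = -(2 * c / δx ^ 2) * (L * conj ū).im := by
  have hδt' : (δt : ℂ) ≠ 0 := ofReal_ne_zero.2 hδt
  have hstep : w - z = I * ((c / δx ^ 2 : ℝ) * L + (δt * normSq ū ^ σ : ℝ) * ū) := by
    push_cast
    field_simp at h
    linear_combination (-I) * h + (w - z) * I_sq
  have hnormSq : normSq w - normSq z = 2 * ((w - z) * conj ū).re := by
    simp only [hū, normSq_apply, map_div₀, map_add, map_ofNat, mul_re, sub_re, sub_im, conj_re,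
      conj_im, div_re, div_im, add_re, add_im]
    norm_num
    ring
  rw [hnormSq, hstep, mul_assoc, I_mul_re, add_mul, mul_assoc _ ū, mul_conj, ← ofReal_mul, add_im,
    ofReal_im, add_zero, mul_assoc, im_ofReal_mul]
  ring

theorem stmt_13_general (σ : ℕ) (Nx : ℕ)
    (δt : ℝ) (hδt : 0 < δt) (δx : ℝ) (c : ℝ)
    (u u' : ℕ → ℂ)
    (hbc : u 0 = 0 ∧ u Nx = 0 ∧ u' 0 = 0 ∧ u' Nx = 0)
    (ubar : ℕ → ℂ) (hubar : ∀ j, ubar j = (u j + u' j) / 2)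
    (hscheme : ∀ j : ℕ, 1 ≤ j → j < Nx →
      Complex.I * (u' j - u j) / (δt : ℂ)
        + ((c : ℂ) / (δt : ℂ)) * (ubar (j + 1) - 2 * ubar j + ubar (j - 1)) / (δx : ℂ) ^ 2
        + ((Complex.normSq (ubar j) : ℂ)) ^ σ * ubar j = 0) :
    δx * ∑ j ∈ Finset.range (Nx + 1), ‖u' j‖ ^ 2
      = δx * ∑ j ∈ Finset.range (Nx + 1), ‖u j‖ ^ 2 := by
  obtain ⟨hu0, huN, hu'0, hu'N⟩ := hbc
  have hlocal : ∀ j ∈ range (Nx + 1), normSq (u' j) - normSq (u j)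
      = -(2 * c / δx ^ 2) * ((ubar (j + 1) - 2 * ubar j + ubar (j - 1)) * conj (ubar j)).im := by
    intro j hj
    obtain rfl | hj0 := j.eq_zero_or_pos
    · simp [hubar, hu0, hu'0]
    obtain rfl | hjN := (Nat.lt_succ_iff.1 (mem_range.1 hj)).eq_or_lt
    · simp [hubar, huN, hu'N]
    exact normSq_sub_normSq_eq_of_midpoint_step hδt.ne' (hubar j) (hscheme j hj0 hjN)
  have hubarN : ubar Nx = 0 := by simp [hubar, huN, hu'N]
  have hcharge : ∑ j ∈ range (Nx + 1), normSq (u' j) = ∑ j ∈ range (Nx + 1), normSq (u j) := by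
    rw [← sub_eq_zero, ← sum_sub_distrib, sum_congr rfl hlocal, ← mul_sum, ← im_sum,
      im_sum_laplacian_mul_conj_eq_zero hubarN, mul_zero]
  simp only [Complex.sq_norm, hcharge]

/-- discrete charge conservation law of the fully discrete
(centered finite difference in space, mid-point in time) scheme under homogeneous
Dirichlet boundary conditions: `δx Σ_j |u'_j|² = δx Σ_j |u_j|²`. -/
theorem stmt_13 (σ : ℕ) (hσ : 0 < σ) (Nx : ℕ) (hNx : 2 ≤ Nx)
    (δt : ℝ) (hδt : 0 < δt) (δx : ℝ) (hδx : 0 < δx) (c : ℝ)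
    (u u' : ℕ → ℂ)
    (hbc : u 0 = 0 ∧ u Nx = 0 ∧ u' 0 = 0 ∧ u' Nx = 0)
    (ubar : ℕ → ℂ) (hubar : ∀ j, ubar j = (u j + u' j) / 2)
    (hscheme : ∀ j : ℕ, 1 ≤ j → j < Nx →
      Complex.I * (u' j - u j) / (δt : ℂ)
        + ((c : ℂ) / (δt : ℂ)) * (ubar (j + 1) - 2 * ubar j + ubar (j - 1)) / (δx : ℂ) ^ 2
        + ((Complex.normSq (ubar j) : ℂ)) ^ σ * ubar j = 0) :
    δx * ∑ j ∈ Finset.range (Nx + 1), ‖u' j‖ ^ 2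
      = δx * ∑ j ∈ Finset.range (Nx + 1), ‖u j‖ ^ 2 :=
  stmt_13_general σ Nx δt hδt δx c u u' hbc ubar hubar hscheme
end

section
/- Under the hypotheses of the discrete multi-symplectic conservation law (z : ℤ × {0,1} → ℝ⁴ satisfying the fully discrete scheme with parameters δt, δx > 0, a ∈ ℝ, σ ∈ ℕ, and ξ, η : ℤ × {0,1} → ℝ⁴ two solutions of the corresponding linearized scheme), assume moreover that ξ and η have finite support in the spatial index, i.e. there exists J ∈ ℕ such that ξ_j^m = 0 and η_j^m = 0 for all |j| ≥ J and m ∈ {0,1}. Then the global discrete symplectic form is preserved: Σ_{j∈ℤ} ( ⟨ξ_j^1, M⁺ η_j^1⟩ − ⟨η_j^1, M⁺ ξ_j^1⟩ ) = Σ_{j∈ℤ} ( ⟨ξ_j^0, M⁺ η_j^0⟩ − ⟨η_j^0, M⁺ ξ_j^0⟩ ) (discrete analogue of the symplecticity of the mid-point scheme, Proposition 3.1, obtained by summing the discrete multi-symplectic conservation law over the spatial grid). -/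
open scoped BigOperators Matrix

noncomputable section

/-- The matrix `K⁺`. -/
def Kp : Matrix (Fin 4) (Fin 4) ℝ :=
  !![0, 0, 1, 0; 0, 0, 0, 1; 0, 0, 0, 0; 0, 0, 0, 0]

/-- The matrix `K⁻`. -/
def Km : Matrix (Fin 4) (Fin 4) ℝ :=
  !![0, 0, 0, 0; 0, 0, 0, 0; -1, 0, 0, 0; 0, -1, 0, 0]

/-- The matrix `M⁺`. -/
def Mp : Matrix (Fin 4) (Fin 4) ℝ :=
  !![0, -1, 0, 0; 0, 0, 0, 0; 0, 0, 0, 0; 0, 0, 0, 0]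

/-- Mid-point (in time) value of a grid function `ℤ × {0,1} → ℝ⁴`. -/
def half (z : ℤ → Fin 2 → Fin 4 → ℝ) (j : ℤ) : Fin 4 → ℝ :=
  (2 : ℝ)⁻¹ • (z j 0 + z j 1)

/-- The fully discrete (centered difference in space, mid-point in time) scheme. -/
def DiscreteScheme (σ : ℕ) (δt δx a : ℝ) (z : ℤ → Fin 2 → Fin 4 → ℝ) : Prop :=
  ∀ j : ℤ,
    δt⁻¹ • Mmat.mulVec (z j 1 - z j 0)
      + (a * δx⁻¹) • Kp.mulVec (half z j - half z (j - 1))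
      + (a * δx⁻¹) • Km.mulVec (half z (j + 1) - half z j)
    = grad4 (S1 σ) (half z j) + a • grad4 S2 (half z j)

/-- The linearization of the fully discrete scheme along `z`. -/
def LinearizedScheme (σ : ℕ) (δt δx a : ℝ) (z ζ : ℤ → Fin 2 → Fin 4 → ℝ) : Prop :=
  ∀ j : ℤ,
    δt⁻¹ • Mmat.mulVec (ζ j 1 - ζ j 0)
      + (a * δx⁻¹) • Kp.mulVec (half ζ j - half ζ (j - 1))
      + (a * δx⁻¹) • Km.mulVec (half ζ (j + 1) - half ζ j)
    = hess4 (S1 σ) (half z j) (half ζ j) + a • hess4 S2 (half z j) (half ζ j)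

/-- Discrete symplectic density `ω_j^m = ⟨ξ_j^m, M⁺ η_j^m⟩ − ⟨η_j^m, M⁺ ξ_j^m⟩`. -/
def omegaD (ξ η : ℤ → Fin 2 → Fin 4 → ℝ) (j : ℤ) (m : Fin 2) : ℝ :=
  dot4 (ξ j m) (Mp.mulVec (η j m)) - dot4 (η j m) (Mp.mulVec (ξ j m))

/-- Discrete symplectic flux `κ_j = ⟨ξ_{j−1}^{1/2}, K⁻ η_j^{1/2}⟩ − ⟨η_{j−1}^{1/2}, K⁻ ξ_j^{1/2}⟩`. -/
def kappaD (ξ η : ℤ → Fin 2 → Fin 4 → ℝ) (j : ℤ) : ℝ :=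
  dot4 (half ξ (j - 1)) (Km.mulVec (half η j)) - dot4 (half η (j - 1)) (Km.mulVec (half ξ j))

/-!
Pair the linearized scheme for `ξ` with `η_j^{1/2}` and the one for `η` with `ξ_j^{1/2}`, and
subtract: the Hessian terms cancel because second derivatives of the `C²` functions `S₁, S₂` are
symmetric. Since `M = M⁺ − (M⁺)ᵀ` and `K⁻ = −(K⁺)ᵀ`, what remains of the left-hand sides is
`δt⁻¹ (ω_j^1 − ω_j^0) + (a/δx) (κ_{j+1} − κ_j)`, the discrete multi-symplectic conservation law.
Summed over `j`, the flux differences telescope, because `κ` has finite support.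
-/

theorem dotProduct_map_single_one {ι : Type*} [Fintype ι] [DecidableEq ι]
    (L : (ι → ℝ) →L[ℝ] ℝ) (u : ι → ℝ) : (u ⬝ᵥ fun i => L (Pi.single i 1)) = L u := by
  conv_rhs => rw [← Finset.univ_sum_single u]
  simp only [dotProduct, map_sum]
  refine Finset.sum_congr rfl fun i _ => ?_
  rw [← smul_eq_mul, ← L.map_smul, ← Pi.single_smul, smul_eq_mul, mul_one]

theorem hess4_apply {f : (Fin 4 → ℝ) → ℝ} (hf : ContDiff ℝ 2 f) (z v : Fin 4 → ℝ) :
    hess4 f z v = fun i => fderiv ℝ (fderiv ℝ f) z v (Pi.single i 1) := by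
  let φ : ((Fin 4 → ℝ) →L[ℝ] ℝ) →L[ℝ] (Fin 4 → ℝ) :=
    ContinuousLinearMap.pi fun i => ContinuousLinearMap.apply ℝ ℝ (Pi.single i 1)
  have hdf : Differentiable ℝ (fderiv ℝ f) :=
    (hf.fderiv_right (m := 1) le_rfl).differentiable one_ne_zero
  have hgrad : grad4 f = φ ∘ fderiv ℝ f := rfl
  rw [hess4, hgrad, fderiv_comp z φ.differentiableAt (hdf z), φ.fderiv]
  rfl

theorem hess4_dotProduct_comm {f : (Fin 4 → ℝ) → ℝ} (hf : ContDiff ℝ 2 f) (z u v : Fin 4 → ℝ) :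
    u ⬝ᵥ hess4 f z v = v ⬝ᵥ hess4 f z u := by
  rw [hess4_apply hf, hess4_apply hf, dotProduct_map_single_one, dotProduct_map_single_one]
  exact (hf.contDiffAt.isSymmSndFDerivAt (by simp)) v u

theorem Mmat_eq_sub_transpose : Mmat = Mp - Mpᵀ := by
  ext i j; fin_cases i <;> fin_cases j <;> simp [Mmat, Mp]

theorem Km_eq_neg_transpose : Km = -Kpᵀ := by
  ext i j; fin_cases i <;> fin_cases j <;> simp [Km, Kp]

section SkewForms

variable {ι R : Type*} [Fintype ι] [CommRing R]

theorem dotProduct_sub_transpose_mulVec_midpoint (A : Matrix ι ι R) (x₀ x₁ y₀ y₁ : ι → R) :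
    (x₀ + x₁) ⬝ᵥ (A - Aᵀ) *ᵥ (y₁ - y₀) - (y₀ + y₁) ⬝ᵥ (A - Aᵀ) *ᵥ (x₁ - x₀)
      = 2 * ((x₁ ⬝ᵥ A *ᵥ y₁ - y₁ ⬝ᵥ A *ᵥ x₁) - (x₀ ⬝ᵥ A *ᵥ y₀ - y₀ ⬝ᵥ A *ᵥ x₀)) := by
  simp only [Matrix.sub_mulVec, Matrix.mulVec_sub, Matrix.mulVec_add, dotProduct_sub,
    add_dotProduct, dotProduct_add, Matrix.dotProduct_transpose_mulVec]
  ring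

theorem dotProduct_centered_difference (K : Matrix ι ι R) (x y : ℤ → ι → R) (j : ℤ) :
    x j ⬝ᵥ (K *ᵥ (y j - y (j - 1)) + (-Kᵀ) *ᵥ (y (j + 1) - y j))
        - y j ⬝ᵥ (K *ᵥ (x j - x (j - 1)) + (-Kᵀ) *ᵥ (x (j + 1) - x j))
      = (x j ⬝ᵥ (-Kᵀ) *ᵥ y (j + 1) - y j ⬝ᵥ (-Kᵀ) *ᵥ x (j + 1))
        - (x (j - 1) ⬝ᵥ (-Kᵀ) *ᵥ y j - y (j - 1) ⬝ᵥ (-Kᵀ) *ᵥ x j) := by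
  simp only [Matrix.neg_mulVec, Matrix.mulVec_sub, dotProduct_add, dotProduct_sub,
    dotProduct_neg, Matrix.dotProduct_transpose_mulVec]
  ring

end SkewForms

def schemeOperator (δt δx a : ℝ) (ζ : ℤ → Fin 2 → Fin 4 → ℝ) (j : ℤ) : Fin 4 → ℝ :=
  δt⁻¹ • Mmat *ᵥ (ζ j 1 - ζ j 0)
    + (a * δx⁻¹) • Kp *ᵥ (half ζ j - half ζ (j - 1))
    + (a * δx⁻¹) • Km *ᵥ (half ζ (j + 1) - half ζ j)

theorem half_dotProduct_schemeOperator_sub (δt δx a : ℝ) (ξ η : ℤ → Fin 2 → Fin 4 → ℝ) (j : ℤ) :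
    half ξ j ⬝ᵥ schemeOperator δt δx a η j - half η j ⬝ᵥ schemeOperator δt δx a ξ j
      = δt⁻¹ * (omegaD ξ η j 1 - omegaD ξ η j 0)
        + a * δx⁻¹ * (kappaD ξ η (j + 1) - kappaD ξ η j) := by
  have htime : half ξ j ⬝ᵥ Mmat *ᵥ (η j 1 - η j 0) - half η j ⬝ᵥ Mmat *ᵥ (ξ j 1 - ξ j 0)
      = omegaD ξ η j 1 - omegaD ξ η j 0 := by
    have := dotProduct_sub_transpose_mulVec_midpoint Mp (ξ j 0) (ξ j 1) (η j 0) (η j 1)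
    rw [← Mmat_eq_sub_transpose] at this
    simp only [half, smul_dotProduct, smul_eq_mul, ← mul_sub, this]
    simp only [omegaD, dot4_eq_dotProduct]
    ring
  have hspace := dotProduct_centered_difference Kp (half ξ) (half η) j
  rw [← Km_eq_neg_transpose] at hspace
  simp only [kappaD, dot4_eq_dotProduct, add_sub_cancel_right]
  simp only [schemeOperator, dotProduct_add, dotProduct_smul, smul_eq_mul] at hspace ⊢
  linear_combination δt⁻¹ * htime + a * δx⁻¹ * hspace

theorem symplectic_conservation_law {σ : ℕ} {δt δx a : ℝ} {z ξ η : ℤ → Fin 2 → Fin 4 → ℝ}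
    (hξ : LinearizedScheme σ δt δx a z ξ) (hη : LinearizedScheme σ δt δx a z η) (j : ℤ) :
    δt⁻¹ * (omegaD ξ η j 1 - omegaD ξ η j 0)
      + a * δx⁻¹ * (kappaD ξ η (j + 1) - kappaD ξ η j) = 0 := by
  rw [← half_dotProduct_schemeOperator_sub,
    show schemeOperator δt δx a ξ j = _ from hξ j, show schemeOperator δt δx a η j = _ from hη j]
  simp only [dotProduct_add, dotProduct_smul, smul_eq_mul,
    hess4_dotProduct_comm (contDiff_S1 σ) _ (half ξ j),
    hess4_dotProduct_comm contDiff_S2 _ (half ξ j), sub_self]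

theorem tsum_int_add_one_sub_eq_zero {G : Type*} [AddCommGroup G] [TopologicalSpace G]
    [IsTopologicalAddGroup G] [T2Space G] {f : ℤ → G} (hf : Summable f) :
    ∑' j, (f (j + 1) - f j) = 0 := by
  have hshift : Summable fun j => f (j + 1) := (Equiv.addRight 1).summable_iff.mpr hf
  rw [hshift.tsum_sub hf, sub_eq_zero]
  exact (Equiv.addRight 1).tsum_eq f

theorem summable_of_eq_zero_of_le_abs {G : Type*} [AddCommMonoid G] [TopologicalSpace G]
    {f : ℤ → G} (N : ℤ) (hf : ∀ j, N ≤ |j| → f j = 0) : Summable f :=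
  summable_of_ne_finset_zero (s := Finset.Ioo (-N) N) fun j hj => hf j <| by
    rw [Finset.mem_Ioo, not_and_or, not_lt, not_lt] at hj
    rw [le_abs]
    omega

theorem omegaD_eq_zero {ξ η : ℤ → Fin 2 → Fin 4 → ℝ} {j : ℤ} {m : Fin 2}
    (hξ : ξ j m = 0) (hη : η j m = 0) : omegaD ξ η j m = 0 := by
  simp [omegaD, hξ, hη, dot4]

theorem kappaD_eq_zero {ξ η : ℤ → Fin 2 → Fin 4 → ℝ} {j : ℤ}
    (h : ∀ m, ξ (j - 1) m = 0 ∧ η (j - 1) m = 0) : kappaD ξ η j = 0 := by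
  simp [kappaD, half, h, dot4]

theorem stmt_15_general (σ : ℕ) (δt δx a : ℝ) (hδt : 0 < δt)
    (z ξ η : ℤ → Fin 2 → Fin 4 → ℝ)
    (hξ : LinearizedScheme σ δt δx a z ξ)
    (hη : LinearizedScheme σ δt δx a z η)
    (J : ℕ) (hsupp : ∀ (j : ℤ) (m : Fin 2), (J : ℤ) ≤ |j| → ξ j m = 0 ∧ η j m = 0) :
    ∑' j : ℤ, omegaD ξ η j 1 = ∑' j : ℤ, omegaD ξ η j 0 := by
  have hω (m : Fin 2) : Summable fun j => omegaD ξ η j m :=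
    summable_of_eq_zero_of_le_abs J fun j hj => omegaD_eq_zero (hsupp j m hj).1 (hsupp j m hj).2
  have hκ : Summable (kappaD ξ η) :=
    summable_of_eq_zero_of_le_abs (J + 1) fun j hj => kappaD_eq_zero fun m => hsupp (j - 1) m <| by
      have := abs_sub_abs_le_abs_sub j 1
      rw [abs_one] at this
      linarith
  have hlocal (j : ℤ) : omegaD ξ η j 1 - omegaD ξ η j 0
      = -(δt * (a * δx⁻¹)) * (kappaD ξ η (j + 1) - kappaD ξ η j) := by
    have h := symplectic_conservation_law hξ hη j
    field_simp [hδt.ne'] at h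
    linear_combination h
  rw [← sub_eq_zero, ← (hω 1).tsum_sub (hω 0)]
  simp only [hlocal, tsum_mul_left, tsum_int_add_one_sub_eq_zero hκ, mul_zero]

/-- summing the discrete multi-symplectic conservation law over the spatial
grid: for spatially finitely supported solutions `ξ, η` of the linearized scheme, the
global discrete symplectic form `Σ_j (⟨ξ_j^m, M⁺η_j^m⟩ − ⟨η_j^m, M⁺ξ_j^m⟩)` is the same
at time levels `m = 0` and `m = 1`. -/
theorem stmt_15 (σ : ℕ) (δt δx a : ℝ) (hδt : 0 < δt) (hδx : 0 < δx)
    (z ξ η : ℤ → Fin 2 → Fin 4 → ℝ)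
    (hz : DiscreteScheme σ δt δx a z)
    (hξ : LinearizedScheme σ δt δx a z ξ)
    (hη : LinearizedScheme σ δt δx a z η)
    (J : ℕ) (hsupp : ∀ (j : ℤ) (m : Fin 2), (J : ℤ) ≤ |j| → ξ j m = 0 ∧ η j m = 0) :
    ∑' j : ℤ, omegaD ξ η j 1 = ∑' j : ℤ, omegaD ξ η j 0 :=
  stmt_15_general σ δt δx a hδt z ξ η hξ hη J hsupp

end
end
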